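/- arXiv:2310.05833 — 3 statements merged into one kernel-verified Lean document; each statement's English description precedes it below -/
import Mathlib

section
/- Let Q be a probability measure on 𝒴, let Y : Ω → 𝒴 be a random element with law Q, and let P̂ be a random probability measure on 𝒴 defined on the same probability space and independent of Y. Then the expected kernel score decomposes as E[S_k(P̂, Y)] = −⟨Q|k|Q⟩ + (⟨E[P̂]|k|E[P̂]⟩ − 2⟨E[P̂]|k|Q⟩ + ⟨Q|k|Q⟩) + Var_k(P̂); that is, it equals the noise −‖Q‖_k² plus the bias ‖E[P̂] − Q‖_k² plus the distributional variance Var_k(P̂). -/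
open MeasureTheory ProbabilityTheory

noncomputable section

/-- The kernel bilinear form `⟨P|k|Q⟩ = ∫∫ k(x,y) dP(x) dQ(y)`. -/
def kerInner {Y : Type*} [MeasurableSpace Y] (k : Y → Y → ℝ) (P Q : Measure Y) : ℝ :=
  ∫ x, ∫ y, k x y ∂Q ∂P

/-- The kernel score `S_k(P, y) = ‖P‖_k² − 2 ∫ k(x, y) dP(x)`. -/
def kScore {Y : Type*} [MeasurableSpace Y] (k : Y → Y → ℝ) (P : Measure Y) (y : Y) : ℝ :=
  kerInner k P P - 2 * ∫ x, k x y ∂P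

/-- The distributional variance `Var_k(P̂) = E[⟨P̂|k|P̂⟩] − ⟨E[P̂]|k|E[P̂]⟩`, where
`E[P̂] = Pr.bind P̂` is the measure `A ↦ E[P̂(A)]`. -/
def distVar {Y Ω : Type*} [MeasurableSpace Y] [MeasurableSpace Ω] (k : Y → Y → ℝ)
    (Pr : Measure Ω) (Phat : Ω → Measure Y) : ℝ :=
  (∫ ω, kerInner k (Phat ω) (Phat ω) ∂Pr) - kerInner k (Pr.bind Phat) (Pr.bind Phat)

/-
Expanding the score, E[S_k(P̂, Y)] = E⟨P̂|k|P̂⟩ − 2 E[∫ k(x, Y) dP̂(x)]. Independence makes the joint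
law of (P̂, Y) the product of the law of P̂ with Q, so by Fubini the cross term is
∫∫ k(x, y) dE[P̂](x) dQ(y) = ⟨E[P̂]|k|Q⟩, and the decomposition is a rearrangement. Boundedness of k
makes every integral finite; measurability in P̂ comes from viewing a measurable family of
probability measures as a Markov kernel.
-/

section

variable {α β E : Type*} [MeasurableSpace α] [MeasurableSpace β]
  [NormedAddCommGroup E] [NormedSpace ℝ E]

lemma norm_integral_le_of_forall_norm_le (μ : Measure β) [IsProbabilityMeasure μ]
    {f : β → E} {C : ℝ} (hC : ∀ x, ‖f x‖ ≤ C) : ‖∫ x, f x ∂μ‖ ≤ C := by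
  simpa using norm_integral_le_of_norm_le_const (μ := μ) (ae_of_all _ hC)

lemma stronglyMeasurable_integral_of_measurable_measure {μ : α → Measure β}
    (hμ : Measurable μ) (hμ1 : ∀ a, IsProbabilityMeasure (μ a)) {f : α × β → E}
    (hf : StronglyMeasurable f) : StronglyMeasurable fun a => ∫ b, f (a, b) ∂μ a :=
  have : IsMarkovKernel (⟨μ, hμ⟩ : Kernel α β) := ⟨hμ1⟩
  hf.integral_kernel_prod_right' (κ := ⟨μ, hμ⟩)

lemma integrable_integral_of_measurable_measure {μ : α → Measure β}
    (hμ : Measurable μ) (hμ1 : ∀ a, IsProbabilityMeasure (μ a)) (ν : Measure α)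
    [IsFiniteMeasure ν] {f : α × β → E} (hf : StronglyMeasurable f) {C : ℝ}
    (hC : ∀ p, ‖f p‖ ≤ C) : Integrable (fun a => ∫ b, f (a, b) ∂μ a) ν :=
  .of_bound (stronglyMeasurable_integral_of_measurable_measure hμ hμ1 hf).aestronglyMeasurable C
    (ae_of_all _ fun a => norm_integral_le_of_forall_norm_le _ fun b => hC (a, b))

lemma integrable_kerInner_self {μ : α → Measure β} (hμ : Measurable μ)
    (hμ1 : ∀ a, IsProbabilityMeasure (μ a)) (ν : Measure α) [IsFiniteMeasure ν]
    {k : β → β → ℝ} (hk : StronglyMeasurable (Function.uncurry k)) {C : ℝ}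
    (hC : ∀ x y, ‖k x y‖ ≤ C) : Integrable (fun a => kerInner k (μ a) (μ a)) ν :=
  integrable_integral_of_measurable_measure hμ hμ1 ν
    (stronglyMeasurable_integral_of_measurable_measure (μ := fun p : α × β => μ p.1)
      (hμ.comp measurable_fst) (fun p => hμ1 p.1)
      (hk.comp_measurable (measurable_fst.snd.prodMk measurable_snd)))
    (fun p => norm_integral_le_of_forall_norm_le _ (hC p.2))

lemma MeasureTheory.Measure.integral_bind {ν : Measure α} {μ : α → Measure β}
    (hμ : Measurable μ) {f : β → E} (hf : Integrable f (ν.bind μ)) :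
    ∫ x, f x ∂ν.bind μ = ∫ a, ∫ x, f x ∂μ a ∂ν := by
  have hcomp := Measure.comp_eq_comp_const_apply (κ := ⟨μ, hμ⟩) (μ := ν)
  change ν.bind μ = _ at hcomp
  rw [hcomp] at hf ⊢
  exact Kernel.integral_comp hf

end

lemma ProbabilityTheory.IndepFun.subtype_coind {Ω β γ : Type*} [MeasurableSpace Ω]
    [MeasurableSpace β] [MeasurableSpace γ] {μ : Measure Ω} {f : Ω → β} {g : Ω → γ}
    {p : β → Prop} (hfg : IndepFun f g μ) (hp : ∀ ω, p (f ω)) :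
    IndepFun (Subtype.coind f hp) g μ := by
  rw [IndepFun_iff_Indep] at hfg ⊢
  rwa [Subtype.instMeasurableSpace, MeasurableSpace.comap_comp]

theorem integral_integral_of_indepFun {Ω Y Z E : Type*} [MeasurableSpace Ω] [MeasurableSpace Y]
    [MeasurableSpace Z] [NormedAddCommGroup E] [NormedSpace ℝ E]
    {Pr : Measure Ω} [IsProbabilityMeasure Pr] {P : Ω → Measure Y} (hP : Measurable P)
    (hP1 : ∀ ω, IsProbabilityMeasure (P ω)) {X : Ω → Z} (hX : Measurable X)
    (hPX : IndepFun P X Pr) {f : Y → Z → E} (hf : StronglyMeasurable (Function.uncurry f))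
    {C : ℝ} (hC : ∀ y z, ‖f y z‖ ≤ C) :
    ∫ ω, ∫ y, f y (X ω) ∂P ω ∂Pr = ∫ z, ∫ y, f y z ∂Pr.bind P ∂Pr.map X := by
  -- `Q ↦ ∫ f dQ` is measurable on probability measures, not on all of `Measure Y`.
  let P' : Ω → ProbabilityMeasure Y := Subtype.coind P hP1
  have hP' : Measurable P' := hP.subtype_mk
  let G : ProbabilityMeasure Y × Z → E := fun q => ∫ y, f y q.2 ∂q.1
  have hμ : Measurable fun q : ProbabilityMeasure Y × Z => (q.1 : Measure Y) :=
    measurable_subtype_coe.comp measurable_fst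
  have hG : StronglyMeasurable G := stronglyMeasurable_integral_of_measurable_measure hμ
    (fun _ => inferInstance)
    (hf.comp_measurable (measurable_snd.prodMk measurable_fst.snd))
  have hG_int : Integrable G ((Pr.map P').prod (Pr.map X)) :=
    .of_bound hG.aestronglyMeasurable C
      (ae_of_all _ fun q => norm_integral_le_of_forall_norm_le _ fun y => hC y q.2)
  have hlaw : Pr.map (fun ω => (P' ω, X ω)) = (Pr.map P').prod (Pr.map X) :=
    (hPX.subtype_coind hP1).map_prod_eq_prod_map_map hP'.aemeasurable hX.aemeasurable
  have : IsProbabilityMeasure (Pr.bind P) :=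
    isProbabilityMeasure_bind hP.aemeasurable (ae_of_all _ hP1)
  calc ∫ ω, ∫ y, f y (X ω) ∂P ω ∂Pr = ∫ ω, G (P' ω, X ω) ∂Pr := rfl
    _ = ∫ q, G q ∂(Pr.map P').prod (Pr.map X) := by
      rw [← hlaw, integral_map (hP'.prodMk hX).aemeasurable hG.aestronglyMeasurable]
    _ = ∫ z, ∫ Q, G (Q, z) ∂Pr.map P' ∂Pr.map X := integral_prod_symm G hG_int
    _ = ∫ z, ∫ ω, ∫ y, f y z ∂P ω ∂Pr ∂Pr.map X := by
      congr with z
      exact integral_map hP'.aemeasurable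
        (hG.comp_measurable (measurable_id.prodMk measurable_const)).aestronglyMeasurable
    _ = ∫ z, ∫ y, f y z ∂Pr.bind P ∂Pr.map X := by
      congr with z
      refine (Measure.integral_bind hP (.of_bound ?_ C (ae_of_all _ fun y => hC y z))).symm
      exact (hf.comp_measurable (measurable_id.prodMk measurable_const)).aestronglyMeasurable

theorem kernel_score_bias_variance_decomposition_general
    {Y Ω : Type*} [MeasurableSpace Y] [MeasurableSpace Ω]
    (Pr : Measure Ω) [IsProbabilityMeasure Pr]
    (k : Y → Y → ℝ)
    (hk_meas : Measurable fun p : Y × Y => k p.1 p.2)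
    (hk_bdd : ∃ K, ∀ x y, |k x y| ≤ K)
    (Q : Measure Y) [IsProbabilityMeasure Q]
    (Yr : Ω → Y) (hYr : Measurable Yr) (hYlaw : Pr.map Yr = Q)
    (Phat : Ω → Measure Y) (hPmeas : Measurable Phat)
    (hPprob : ∀ ω, IsProbabilityMeasure (Phat ω))
    (hindep : IndepFun Phat Yr Pr) :
    ∫ ω, kScore k (Phat ω) (Yr ω) ∂Pr =
      -(kerInner k Q Q)
      + (kerInner k (Pr.bind Phat) (Pr.bind Phat) - 2 * kerInner k (Pr.bind Phat) Q
          + kerInner k Q Q)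
      + distVar k Pr Phat := by
  obtain ⟨K, hK⟩ := hk_bdd
  have hk : StronglyMeasurable (Function.uncurry k) := hk_meas.stronglyMeasurable
  have hkK : ∀ x y, ‖k x y‖ ≤ K := hK
  have : IsProbabilityMeasure (Pr.bind Phat) :=
    isProbabilityMeasure_bind hPmeas.aemeasurable (ae_of_all _ hPprob)
  have hself_int : Integrable (fun ω => kerInner k (Phat ω) (Phat ω)) Pr :=
    integrable_kerInner_self hPmeas hPprob Pr hk hkK
  have hcross_int : Integrable (fun ω => ∫ x, k x (Yr ω) ∂Phat ω) Pr :=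
    integrable_integral_of_measurable_measure hPmeas hPprob Pr
      (hk.comp_measurable (measurable_snd.prodMk (hYr.comp measurable_fst)))
      (fun p => hkK p.2 (Yr p.1))
  have hcross : ∫ ω, ∫ x, k x (Yr ω) ∂Phat ω ∂Pr = kerInner k (Pr.bind Phat) Q := by
    rw [integral_integral_of_indepFun hPmeas hPprob hYr hindep hk hkK, hYlaw, kerInner,
      integral_integral_swap (Integrable.of_bound hk.aestronglyMeasurable K
        (ae_of_all _ fun p => hkK p.1 p.2))]
  simp only [kScore]
  rw [integral_sub hself_int (hcross_int.const_mul 2), integral_const_mul, hcross, distVar]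
  ring

/-- Bias-variance decomposition of the expected kernel score:
`E[S_k(P̂, Y)] = −‖Q‖_k² + ‖E[P̂] − Q‖_k² + Var_k(P̂)`. -/
theorem kernel_score_bias_variance_decomposition
    {Y Ω : Type*} [MeasurableSpace Y] [MeasurableSpace Ω]
    (Pr : Measure Ω) [IsProbabilityMeasure Pr]
    (k : Y → Y → ℝ)
    (hk_meas : Measurable fun p : Y × Y => k p.1 p.2)
    (hk_symm : ∀ x y, k x y = k y x)
    (hk_bdd : ∃ K, ∀ x y, |k x y| ≤ K)
    (hk_psd : ∀ (N : ℕ) (x : Fin N → Y) (a : Fin N → ℝ),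
      0 ≤ ∑ i, ∑ j, a i * k (x i) (x j) * a j)
    (Q : Measure Y) [IsProbabilityMeasure Q]
    (Yr : Ω → Y) (hYr : Measurable Yr) (hYlaw : Pr.map Yr = Q)
    (Phat : Ω → Measure Y) (hPmeas : Measurable Phat)
    (hPprob : ∀ ω, IsProbabilityMeasure (Phat ω))
    (hindep : IndepFun Phat Yr Pr) :
    ∫ ω, kScore k (Phat ω) (Yr ω) ∂Pr =
      -(kerInner k Q Q)
      + (kerInner k (Pr.bind Phat) (Pr.bind Phat) - 2 * kerInner k (Pr.bind Phat) Q
          + kerInner k Q Q)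
      + distVar k Pr Phat :=
  kernel_score_bias_variance_decomposition_general Pr k hk_meas hk_bdd Q Yr hYr hYlaw Phat hPmeas
    hPprob hindep
end
end

section
/- Let Q be a probability measure on 𝒴, Y : Ω → 𝒴 a random element with law Q, and let P̂₁, …, P̂ₙ (n ≥ 2) be random probability measures on 𝒴 on the same probability space, jointly independent of Y, identically distributed, and with a common value of Cov_k(P̂ᵢ, P̂ⱼ) for all i ≠ j. Then the improvement of the mixture ensemble over a single model equals E[S_k(P̂₁, Y)] − E[S_k((1/n) Σᵢ₌₁ⁿ P̂ᵢ, Y)] = ((n−1)/n) (Var_k(P̂₁) − Cov_k(P̂₁, P̂₂)). -/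
open MeasureTheory ProbabilityTheory

noncomputable section

/-- The distributional covariance `Cov_k(P̂, Q̂) = E[⟨P̂|k|Q̂⟩] − ⟨E[P̂]|k|E[Q̂]⟩`. -/
def distCov {Y Ω : Type*} [MeasurableSpace Y] [MeasurableSpace Ω] (k : Y → Y → ℝ)
    (Pr : Measure Ω) (Phat Qhat : Ω → Measure Y) : ℝ :=
  (∫ ω, kerInner k (Phat ω) (Qhat ω) ∂Pr) - kerInner k (Pr.bind Phat) (Pr.bind Qhat)

section Helpers

variable {Y : Type*} [MeasurableSpace Y] {k : Y → Y → ℝ} {K : ℝ}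

/-- Probability measures as a measurable subtype of measures. -/
abbrev PMsub (Y : Type*) [MeasurableSpace Y] : Type _ := {μ : Measure Y // μ Set.univ = 1}

instance (p : PMsub Y) : IsProbabilityMeasure (p.1 : Measure Y) := ⟨p.2⟩

lemma kmeas_right (hk : Measurable fun p : Y × Y => k p.1 p.2) (y : Y) :
    Measurable fun x => k x y :=
  hk.comp (measurable_id.prodMk measurable_const)

lemma kmeas_left (hk : Measurable fun p : Y × Y => k p.1 p.2) (x : Y) :
    Measurable fun y => k x y :=
  hk.comp (measurable_const.prodMk measurable_id)

lemma kint_right (hk : Measurable fun p : Y × Y => k p.1 p.2) (hb : ∀ x y, |k x y| ≤ K)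
    (y : Y) (μ : Measure Y) [IsFiniteMeasure μ] : Integrable (fun x => k x y) μ :=
  ⟨(kmeas_right hk y).aestronglyMeasurable,
    HasFiniteIntegral.of_bounded (C := K) (ae_of_all _ fun x => by
      simpa [Real.norm_eq_abs] using hb x y)⟩

lemma kint_left (hk : Measurable fun p : Y × Y => k p.1 p.2) (hb : ∀ x y, |k x y| ≤ K)
    (x : Y) (μ : Measure Y) [IsFiniteMeasure μ] : Integrable (fun y => k x y) μ :=
  ⟨(kmeas_left hk x).aestronglyMeasurable,
    HasFiniteIntegral.of_bounded (C := K) (ae_of_all _ fun y => by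
      simpa [Real.norm_eq_abs] using hb x y)⟩

lemma kbound_right (hb : ∀ x y, |k x y| ≤ K) (y : Y) (μ : Measure Y)
    [IsProbabilityMeasure μ] : ‖∫ x, k x y ∂μ‖ ≤ K := by
  have := norm_integral_le_of_norm_le_const (μ := μ) (f := fun x => k x y) (C := K)
    (ae_of_all _ fun x => by simpa [Real.norm_eq_abs] using hb x y)
  simpa [measure_univ] using this

lemma kbound_left (hb : ∀ x y, |k x y| ≤ K) (x : Y) (μ : Measure Y)
    [IsProbabilityMeasure μ] : ‖∫ y, k x y ∂μ‖ ≤ K := by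
  have := norm_integral_le_of_norm_le_const (μ := μ) (f := fun y => k x y) (C := K)
    (ae_of_all _ fun y => by simpa [Real.norm_eq_abs] using hb x y)
  simpa [measure_univ] using this

lemma meas_h (hk : Measurable fun p : Y × Y => k p.1 p.2) :
    Measurable fun p : PMsub Y × Y => ∫ x, k x p.2 ∂(p.1.1 : Measure Y) := by
  let κ : Kernel (PMsub Y × Y) Y :=
    ⟨fun p => (p.1.1 : Measure Y), measurable_subtype_coe.comp measurable_fst⟩
  haveI : IsMarkovKernel κ := ⟨fun p => ⟨p.1.2⟩⟩
  have hf : StronglyMeasurable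
      (Function.uncurry fun (p : PMsub Y × Y) (x : Y) => k x p.2) :=
    (hk.comp (measurable_snd.prodMk (measurable_snd.comp measurable_fst))).stronglyMeasurable
  exact (MeasureTheory.StronglyMeasurable.integral_kernel_prod_right (κ := κ) hf).measurable

lemma meas_h2 (hk : Measurable fun p : Y × Y => k p.1 p.2) :
    Measurable fun p : PMsub Y × Y => ∫ y, k p.2 y ∂(p.1.1 : Measure Y) := by
  let κ : Kernel (PMsub Y × Y) Y :=
    ⟨fun p => (p.1.1 : Measure Y), measurable_subtype_coe.comp measurable_fst⟩
  haveI : IsMarkovKernel κ := ⟨fun p => ⟨p.1.2⟩⟩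
  have hf : StronglyMeasurable
      (Function.uncurry fun (p : PMsub Y × Y) (y : Y) => k p.2 y) :=
    (hk.comp ((measurable_snd.comp measurable_fst).prodMk measurable_snd)).stronglyMeasurable
  exact (MeasureTheory.StronglyMeasurable.integral_kernel_prod_right (κ := κ) hf).measurable

lemma meas_g (hk : Measurable fun p : Y × Y => k p.1 p.2) :
    Measurable fun p : PMsub Y × PMsub Y =>
      ∫ x, ∫ y, k x y ∂(p.2.1 : Measure Y) ∂(p.1.1 : Measure Y) := by
  have hinner : Measurable fun q : (PMsub Y × PMsub Y) × Y =>
      ∫ y, k q.2 y ∂(q.1.2.1 : Measure Y) :=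
    (meas_h2 hk).comp ((measurable_snd.comp measurable_fst).prodMk measurable_snd)
  let κ : Kernel (PMsub Y × PMsub Y) Y :=
    ⟨fun p => (p.1.1 : Measure Y), measurable_subtype_coe.comp measurable_fst⟩
  haveI : IsMarkovKernel κ := ⟨fun p => ⟨p.1.2⟩⟩
  have hf : StronglyMeasurable
      (Function.uncurry fun (p : PMsub Y × PMsub Y) (x : Y) =>
        ∫ y, k x y ∂(p.2.1 : Measure Y)) := hinner.stronglyMeasurable
  exact (MeasureTheory.StronglyMeasurable.integral_kernel_prod_right (κ := κ) hf).measurable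

open Classical in
/-- Send a measure to itself as an element of `PMsub` when it is a probability measure,
with a default value otherwise. -/
def toPM (ν : PMsub Y) (μ : Measure Y) : PMsub Y :=
  if h : μ Set.univ = 1 then ⟨μ, h⟩ else ν

lemma toPM_coe (ν : PMsub Y) (μ : Measure Y) [h : IsProbabilityMeasure μ] :
    (toPM ν μ).1 = μ := by
  rw [toPM, dif_pos h.measure_univ]

lemma measurable_toPM (ν : PMsub Y) : Measurable (toPM ν) := by
  classical
  have hs : MeasurableSet {μ : Measure Y | μ Set.univ = 1} := by
    have h1 : {μ : Measure Y | μ Set.univ = 1}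
        = (fun μ : Measure Y => μ Set.univ) ⁻¹' {1} := rfl
    rw [h1]
    exact Measure.measurable_coe MeasurableSet.univ (measurableSet_singleton 1)
  have hmf : Measurable fun μ : {μ : Measure Y | μ Set.univ = 1} =>
      (⟨μ.1, μ.2⟩ : PMsub Y) :=
    Measurable.subtype_mk measurable_subtype_coe
  have hmg : Measurable fun _ : ({μ : Measure Y | μ Set.univ = 1}ᶜ : Set (Measure Y)) =>
      ν := measurable_const
  have heq : toPM ν = fun μ =>
      if hx : μ ∈ {μ : Measure Y | μ Set.univ = 1} then (⟨μ, hx⟩ : PMsub Y)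
      else ν := by
    funext μ
    by_cases h : μ Set.univ = 1
    · simp only [toPM, Set.mem_setOf_eq, h, dif_pos]
    · simp only [toPM, Set.mem_setOf_eq, h, dif_neg, not_false_iff]
  rw [heq]
  exact Measurable.dite hmf hmg hs

end Helpers

/-- Generalization improvement of the mixture ensemble over a single model:
`E[S_k(P̂₁, Y)] − E[S_k(P̂⁽ⁿ⁾, Y)] = ((n−1)/n) (Var_k(P̂₁) − Cov_k(P̂₁, P̂₂))`. -/
theorem ensemble_improvement_over_single_model
    {Y Ω : Type*} [MeasurableSpace Y] [MeasurableSpace Ω]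
    (Pr : Measure Ω) [IsProbabilityMeasure Pr]
    (k : Y → Y → ℝ)
    (hk_meas : Measurable fun p : Y × Y => k p.1 p.2)
    (hk_symm : ∀ x y, k x y = k y x)
    (hk_bdd : ∃ K, ∀ x y, |k x y| ≤ K)
    (hk_psd : ∀ (N : ℕ) (x : Fin N → Y) (a : Fin N → ℝ),
      0 ≤ ∑ i, ∑ j, a i * k (x i) (x j) * a j)
    (Q : Measure Y) [IsProbabilityMeasure Q]
    (Yr : Ω → Y) (hYr : Measurable Yr) (hYlaw : Pr.map Yr = Q)
    (n : ℕ) (hn : 2 ≤ n)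
    (Phat : Fin n → Ω → Measure Y)
    (hPmeas : ∀ i, Measurable (Phat i))
    (hPprob : ∀ i ω, IsProbabilityMeasure (Phat i ω))
    (hindep : IndepFun (fun ω i => Phat i ω) Yr Pr)
    (hid : ∀ i j, Pr.map (Phat i) = Pr.map (Phat j))
    (hcov : ∀ i j i' j', i ≠ j → i' ≠ j' →
      distCov k Pr (Phat i) (Phat j) = distCov k Pr (Phat i') (Phat j')) :
    (∫ ω, kScore k (Phat ⟨0, by omega⟩ ω) (Yr ω) ∂Pr)
      - (∫ ω, kScore k ((n : ENNReal)⁻¹ • ∑ i, Phat i ω) (Yr ω) ∂Pr)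
      = (((n : ℝ) - 1) / (n : ℝ)) *
          (distVar k Pr (Phat ⟨0, by omega⟩)
            - distCov k Pr (Phat ⟨0, by omega⟩) (Phat ⟨1, by omega⟩)) := by
  classical
  obtain ⟨K, hb⟩ := hk_bdd
  have hn0 : (n : ℝ) ≠ 0 := by
    have h : (0:ℕ) < n := by omega
    exact_mod_cast h.ne'
  set i0 : Fin n := ⟨0, by omega⟩ with hi0
  set i1 : Fin n := ⟨1, by omega⟩ with hi1
  let ν0 : PMsub Y := ⟨Q, measure_univ⟩
  let Φ : Fin n → Ω → PMsub Y := fun i ω => toPM ν0 (Phat i ω)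
  have hΦcoe : ∀ i ω, (Φ i ω).1 = Phat i ω := fun i ω => by
    haveI := hPprob i ω; exact toPM_coe ν0 (Phat i ω)
  have hΦmeas : ∀ i, Measurable (Φ i) := fun i => (measurable_toPM ν0).comp (hPmeas i)
  have hΦmap : ∀ i, Pr.map (Φ i) = Pr.map (Φ i0) := fun i => by
    show Pr.map (toPM ν0 ∘ Phat i) = Pr.map (toPM ν0 ∘ Phat i0)
    rw [← Measure.map_map (measurable_toPM ν0) (hPmeas i),
      ← Measure.map_map (measurable_toPM ν0) (hPmeas i0), hid i i0]
  set hfun : PMsub Y × Y → ℝ := fun p => ∫ x, k x p.2 ∂(p.1.1) with hhfun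
  have hfun_meas : Measurable hfun := meas_h hk_meas
  set gfun : PMsub Y × PMsub Y → ℝ := fun p => kerInner k p.1.1 p.2.1 with hgfun
  have gfun_meas : Measurable gfun := meas_g hk_meas
  set T : Fin n → ℝ := fun i => ∫ ω, (∫ x, k x (Yr ω) ∂(Phat i ω)) ∂Pr with hTdef
  set V : Fin n → Fin n → ℝ := fun i j => ∫ ω, kerInner k (Phat i ω) (Phat j ω) ∂Pr with hVdef
  have hTmeasω : ∀ i, Measurable fun ω => ∫ x, k x (Yr ω) ∂(Phat i ω) := fun i => by
    have he : (fun ω => ∫ x, k x (Yr ω) ∂(Phat i ω)) = fun ω => hfun (Φ i ω, Yr ω) := by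
      funext ω; rw [hhfun]; simp only; rw [hΦcoe]
    rw [he]; exact hfun_meas.comp ((hΦmeas i).prodMk hYr)
  have hTbddω : ∀ i ω, ‖∫ x, k x (Yr ω) ∂(Phat i ω)‖ ≤ K := fun i ω => by
    haveI := hPprob i ω; exact kbound_right hb _ _
  have hTint : ∀ i, Integrable (fun ω => ∫ x, k x (Yr ω) ∂(Phat i ω)) Pr := fun i =>
    ⟨(hTmeasω i).aestronglyMeasurable,
      HasFiniteIntegral.of_bounded (C := K) (ae_of_all _ (hTbddω i))⟩
  have hVmeasω : ∀ i j, Measurable fun ω => kerInner k (Phat i ω) (Phat j ω) := fun i j => by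
    have he : (fun ω => kerInner k (Phat i ω) (Phat j ω)) = fun ω => gfun (Φ i ω, Φ j ω) := by
      funext ω; rw [hgfun]; simp only; rw [hΦcoe, hΦcoe]
    rw [he]; exact gfun_meas.comp ((hΦmeas i).prodMk (hΦmeas j))
  have hkerbdd : ∀ (μ ξ : Measure Y), IsProbabilityMeasure μ → IsProbabilityMeasure ξ →
      ‖kerInner k μ ξ‖ ≤ K := by
    intro μ ξ h1 h2
    have h := norm_integral_le_of_norm_le_const (μ := μ) (f := fun x => ∫ y, k x y ∂ξ) (C := K)
      (ae_of_all _ fun x => kbound_left hb x ξ)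
    simpa [kerInner, measure_univ] using h
  have hVbddω : ∀ i j ω, ‖kerInner k (Phat i ω) (Phat j ω)‖ ≤ K := fun i j ω =>
    hkerbdd _ _ (hPprob i ω) (hPprob j ω)
  have hVint : ∀ i j, Integrable (fun ω => kerInner k (Phat i ω) (Phat j ω)) Pr := fun i j =>
    ⟨(hVmeasω i j).aestronglyMeasurable,
      HasFiniteIntegral.of_bounded (C := K) (ae_of_all _ (hVbddω i j))⟩
  have hΦindep : ∀ i, IndepFun (Φ i) Yr Pr := fun i => by
    have h := hindep.comp (φ := fun p : Fin n → Measure Y => toPM ν0 (p i)) (ψ := id)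
      ((measurable_toPM ν0).comp (measurable_pi_apply i)) measurable_id
    exact h
  have hTconst : ∀ i, T i = T i0 := by
    have key : ∀ j : Fin n, T j = ∫ p, hfun p ∂((Pr.map (Φ j)).prod Q) := by
      intro j
      have hpair : Pr.map (fun ω => (Φ j ω, Yr ω)) = (Pr.map (Φ j)).prod (Pr.map Yr) :=
        (indepFun_iff_map_prod_eq_prod_map_map (hΦmeas j).aemeasurable
          hYr.aemeasurable).mp (hΦindep j)
      have h1 : T j = ∫ ω, hfun (Φ j ω, Yr ω) ∂Pr := by
        rw [hTdef]; simp only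
        congr 1; funext ω; rw [hhfun]; simp only; rw [hΦcoe]
      rw [h1, ← integral_map ((hΦmeas j).prodMk hYr).aemeasurable
        hfun_meas.aestronglyMeasurable, hpair, hYlaw]
    intro i; rw [key i, key i0, hΦmap i]
  have hVdiag : ∀ i, V i i = V i0 i0 := by
    have key : ∀ j : Fin n, V j j = ∫ q, gfun (q, q) ∂(Pr.map (Φ j)) := by
      intro j
      have h1 : V j j = ∫ ω, gfun (Φ j ω, Φ j ω) ∂Pr := by
        rw [hVdef]; simp only
        congr 1; funext ω; rw [hgfun]; simp only; rw [hΦcoe]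
      have hgm : Measurable fun q : PMsub Y => gfun (q, q) :=
        gfun_meas.comp (measurable_id.prodMk measurable_id)
      rw [h1]
      exact (integral_map (hΦmeas j).aemeasurable hgm.aestronglyMeasurable).symm
    intro i; rw [key i, key i0, hΦmap i]
  have hbind : ∀ i, Pr.bind (Phat i) = Pr.bind (Phat i0) := fun i => by
    show (Pr.map (Phat i)).join = (Pr.map (Phat i0)).join
    rw [hid i i0]
  set m : ℝ := kerInner k (Pr.bind (Phat i0)) (Pr.bind (Phat i0)) with hm
  set c0 : ℝ := distCov k Pr (Phat i0) (Phat i1) with hc0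
  have h01 : i0 ≠ i1 := by
    simp only [hi0, hi1, ne_eq, Fin.mk.injEq]; omega
  have hVoff : ∀ i j, i ≠ j → V i j = c0 + m := by
    intro i j hij
    have hcc := hcov i j i0 i1 hij h01
    have hd : distCov k Pr (Phat i) (Phat j) = V i j - m := by
      rw [distCov, hbind i, hbind j, hVdef, hm]
    rw [hc0, ← hcc, hd]; ring
  have hVar : distVar k Pr (Phat i0) = V i0 i0 - m := by
    rw [distVar, hVdef, hm]
  have hE1 : (∫ ω, kScore k (Phat i0 ω) (Yr ω) ∂Pr) = V i0 i0 - 2 * T i0 := by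
    simp only [kScore]
    rw [integral_sub (hVint i0 i0) ((hTint i0).const_mul 2), integral_const_mul, hVdef, hTdef]
  have crr : ((n : ENNReal)⁻¹).toReal = (n : ℝ)⁻¹ := by
    rw [ENNReal.toReal_inv, ENNReal.toReal_natCast]
  have hmix : ∀ ω, kScore k ((n : ENNReal)⁻¹ • ∑ i, Phat i ω) (Yr ω)
      = (n : ℝ)⁻¹ * (∑ i, (n : ℝ)⁻¹ * ∑ j, kerInner k (Phat i ω) (Phat j ω))
        - 2 * ((n : ℝ)⁻¹ * ∑ i, ∫ x, k x (Yr ω) ∂(Phat i ω)) := by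
    intro ω
    haveI : ∀ i : Fin n, IsProbabilityMeasure (Phat i ω) := fun i => hPprob i ω
    have hsum : ∀ (f : Y → ℝ), (∀ i : Fin n, Integrable f (Phat i ω)) →
        ∫ x, f x ∂((n : ENNReal)⁻¹ • ∑ i, Phat i ω)
          = (n : ℝ)⁻¹ * ∑ i, ∫ x, f x ∂(Phat i ω) := by
      intro f hf
      rw [integral_smul_measure, integral_finset_sum_measure (fun i _ => hf i), crr, smul_eq_mul]
    have hFj_meas : ∀ (j : Fin n), Measurable fun x => ∫ y, k x y ∂(Phat j ω) := by
      intro j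
      have he : (fun x => ∫ y, k x y ∂(Phat j ω)) = fun x => ∫ y, k x y ∂((Φ j ω).1) := by
        funext x; rw [hΦcoe]
      rw [he]
      exact (meas_h2 hk_meas).comp (measurable_const.prodMk measurable_id)
    have hFj_int : ∀ (i j : Fin n), Integrable (fun x => ∫ y, k x y ∂(Phat j ω)) (Phat i ω) :=
      fun i j => ⟨(hFj_meas j).aestronglyMeasurable,
        HasFiniteIntegral.of_bounded (C := K) (ae_of_all _ fun x => kbound_left hb x _)⟩
    have hinner_eq : ∀ x : Y, (∫ y, k x y ∂((n : ENNReal)⁻¹ • ∑ i, Phat i ω))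
        = (n : ℝ)⁻¹ * ∑ j, ∫ y, k x y ∂(Phat j ω) := fun x =>
      hsum _ (fun i => kint_left hk_meas hb x _)
    have hker : kerInner k ((n : ENNReal)⁻¹ • ∑ i, Phat i ω) ((n : ENNReal)⁻¹ • ∑ i, Phat i ω)
        = (n : ℝ)⁻¹ * ∑ i, (n : ℝ)⁻¹ * ∑ j, kerInner k (Phat i ω) (Phat j ω) := by
      have h1 : kerInner k ((n : ENNReal)⁻¹ • ∑ i, Phat i ω) ((n : ENNReal)⁻¹ • ∑ i, Phat i ω)
          = ∫ x, ((n : ℝ)⁻¹ * ∑ j, ∫ y, k x y ∂(Phat j ω))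
              ∂((n : ENNReal)⁻¹ • ∑ i, Phat i ω) := by
        rw [kerInner]
        exact integral_congr_ae (ae_of_all _ fun x => hinner_eq x)
      rw [h1, hsum _ (fun i => (integrable_finset_sum _ (fun j _ => hFj_int i j)).const_mul _)]
      congr 1
      refine Finset.sum_congr rfl fun i _ => ?_
      rw [integral_const_mul, integral_finset_sum _ (fun j _ => hFj_int i j)]
      rfl
    have hcross : (∫ x, k x (Yr ω) ∂((n : ENNReal)⁻¹ • ∑ i, Phat i ω))
        = (n : ℝ)⁻¹ * ∑ i, ∫ x, k x (Yr ω) ∂(Phat i ω) :=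
      hsum _ (fun i => kint_right hk_meas hb _ _)
    rw [kScore, hker, hcross]
  have hE2 : (∫ ω, kScore k ((n : ENNReal)⁻¹ • ∑ i, Phat i ω) (Yr ω) ∂Pr)
      = (n : ℝ)⁻¹ * (∑ i, (n : ℝ)⁻¹ * ∑ j, V i j) - 2 * ((n : ℝ)⁻¹ * ∑ i, T i) := by
    have hVi : ∀ i, (∫ ω, (n : ℝ)⁻¹ * ∑ j, kerInner k (Phat i ω) (Phat j ω) ∂Pr)
        = (n : ℝ)⁻¹ * ∑ j, V i j := fun i => by
      rw [integral_const_mul, integral_finset_sum _ (fun j _ => hVint i j), hVdef]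
    have hA : Integrable (fun ω =>
        (n : ℝ)⁻¹ * ∑ i, (n : ℝ)⁻¹ * ∑ j, kerInner k (Phat i ω) (Phat j ω)) Pr :=
      (integrable_finset_sum _ (fun i _ =>
        (integrable_finset_sum _ (fun j _ => hVint i j)).const_mul _)).const_mul _
    have hB : Integrable (fun ω =>
        (n : ℝ)⁻¹ * ∑ i, ∫ x, k x (Yr ω) ∂(Phat i ω)) Pr :=
      (integrable_finset_sum _ (fun i _ => hTint i)).const_mul _
    simp only [hmix]
    rw [integral_sub hA (hB.const_mul 2), integral_const_mul, integral_const_mul,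
      integral_const_mul,
      integral_finset_sum _ (fun i _ =>
        (integrable_finset_sum _ (fun j _ => hVint i j)).const_mul _),
      integral_finset_sum _ (fun i _ => hTint i),
      Finset.sum_congr rfl (fun i _ => hVi i), hTdef]
  set Bv : ℝ := c0 + m with hBv
  have hrow : ∀ i : Fin n, (∑ j, V i j) = V i0 i0 + ((n : ℝ) - 1) * Bv := by
    intro i
    have hterm : ∀ j, V i j = Bv + (if i = j then V i0 i0 - Bv else 0) := by
      intro j
      by_cases h : i = j
      · subst h; rw [if_pos rfl, hVdiag i]; ring
      · rw [if_neg h, hVoff i j h, hBv]; ring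
    rw [Finset.sum_congr rfl (fun j _ => hterm j), Finset.sum_add_distrib,
      Finset.sum_const, Finset.sum_ite_eq, if_pos (Finset.mem_univ i),
      Finset.card_univ, Fintype.card_fin, nsmul_eq_mul]
    ring
  have hsumV : (∑ i : Fin n, (n : ℝ)⁻¹ * ∑ j, V i j)
      = (n : ℝ) * ((n : ℝ)⁻¹ * (V i0 i0 + ((n : ℝ) - 1) * Bv)) := by
    rw [Finset.sum_congr rfl (fun i _ => by rw [hrow i]), Finset.sum_const,
      Finset.card_univ, Fintype.card_fin, nsmul_eq_mul]
  have hsumT : (∑ i : Fin n, T i) = (n : ℝ) * T i0 := by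
    rw [Finset.sum_congr rfl (fun i _ => hTconst i), Finset.sum_const,
      Finset.card_univ, Fintype.card_fin, nsmul_eq_mul]
  rw [hE1, hE2, hsumV, hsumT, hVar, hBv]
  field_simp
  ring
end
end

section
/- Let n ≥ 2 and m ≥ 2 and let μ_{n,m} be the two-stage sampling law associated with ν. Then for any indices with j ≠ t: ∫ k(X_{ij}, X_{it}) dμ_{n,m}(X) = ∫ ⟨P|k|P⟩ dν(P), and for any indices with i ≠ s: ∫ k(X_{ij}, X_{st}) dμ_{n,m}(X) = ⟨join(ν)|k|join(ν)⟩. -/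
open MeasureTheory ProbabilityTheory

noncomputable section

/-- The σ-algebra on the space of probability measures induced from the σ-algebra on
`Measure Y` generated by the evaluation maps. -/
instance {Y : Type*} [MeasurableSpace Y] : MeasurableSpace (ProbabilityMeasure Y) :=
  MeasurableSpace.comap (fun P => (P : Measure Y)) inferInstance

/-- `join(ν)`: the probability measure `A ↦ ∫ P(A) dν(P)`. -/
def pmJoin {Y : Type*} [MeasurableSpace Y] (ν : Measure (ProbabilityMeasure Y)) : Measure Y :=
  ν.bind (fun P => (P : Measure Y))

/-- The two-stage sampling law `μ_{n,m}` on `Fin n → Fin m → Y`: sample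
`P₁, …, Pₙ` i.i.d. from `ν`, then conditionally on `Pᵢ` sample `X_{i1}, …, X_{im}`
i.i.d. from `Pᵢ`, independently across `i`. -/
def twoStage {Y : Type*} [MeasurableSpace Y] (ν : Measure (ProbabilityMeasure Y))
    (n m : ℕ) : Measure (Fin n → Fin m → Y) :=
  (Measure.pi fun _ : Fin n => ν).bind
    (fun Ps => Measure.pi fun i : Fin n => Measure.pi fun _ : Fin m => (Ps i : Measure Y))

/-
Conditionally on `P₁, …, Pₙ`, the sample is a product measure over the index set
`Fin n × Fin m`, so any two distinct coordinates `X_{ij}`, `X_{st}` are independent with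
conditional law `Pᵢ ⊗ Pₛ`. Averaging over the `Pᵢ`: if `i = s` the pair has law
`∫ P ⊗ P dν(P)`; if `i ≠ s` then `(Pᵢ, Pₛ)` has law `ν ⊗ ν`, and averaging `P ⊗ Q` over
`ν ⊗ ν` gives `join(ν) ⊗ join(ν)`. Since `k` is bounded it is integrable against all these
laws, and Fubini turns the two integrals of `k` into `∫ ⟨P|k|P⟩ dν(P)` and
`⟨join(ν)|k|join(ν)⟩`.
-/

namespace MeasureTheory.Measure

variable {α β γ : Type*} [MeasurableSpace α] [MeasurableSpace β] [MeasurableSpace γ]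

lemma map_bind {μ : Measure α} {κ : α → Measure β} (hκ : Measurable κ) {f : β → γ}
    (hf : Measurable f) : (μ.bind κ).map f = μ.bind fun a => (κ a).map f := by
  ext s hs
  have hκf : Measurable fun a => (κ a).map f := (measurable_map f hf).comp hκ
  rw [map_apply hf hs, bind_apply (hf hs) hκ.aemeasurable, bind_apply hs hκf.aemeasurable]
  simp_rw [map_apply hf hs]

lemma bind_map {μ : Measure α} {f : α → β} (hf : Measurable f) {κ : β → Measure γ}
    (hκ : Measurable κ) : (μ.map f).bind κ = μ.bind (κ ∘ f) := by
  ext s hs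
  have hκs : Measurable fun b => κ b s := (measurable_coe hs).comp hκ
  rw [bind_apply hs hκ.aemeasurable, bind_apply hs (hκ.comp hf).aemeasurable,
    lintegral_map hκs hf]
  rfl

lemma integral_bind_s11 {E : Type*} [NormedAddCommGroup E] [NormedSpace ℝ E]
    {μ : Measure α} [SFinite μ] {κ : α → Measure β} (hκ : Measurable κ)
    [∀ a, IsProbabilityMeasure (κ a)] {f : β → E} (hf : Integrable f (μ.bind κ)) :
    ∫ x, f x ∂μ.bind κ = ∫ a, ∫ x, f x ∂κ a ∂μ := by
  let K : Kernel α β := ⟨κ, hκ⟩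
  have : IsMarkovKernel K := ⟨‹_›⟩
  have h := Kernel.integral_comp (η := K) (κ := Kernel.const Unit μ) (a := ())
    (by rwa [← comp_eq_comp_const_apply])
  rw [← comp_eq_comp_const_apply] at h
  exact h

lemma measurable_measure_pi {ι : Type*} [Fintype ι] {X : ι → Type*}
    [∀ i, MeasurableSpace (X i)] {κ : ∀ i, α → Measure (X i)}
    [∀ i a, IsProbabilityMeasure (κ i a)]
    (hκ : ∀ i, Measurable (κ i)) : Measurable fun a => Measure.pi fun i => κ i a := by
  refine .measure_of_isPiSystem_of_isProbabilityMeasure generateFrom_pi.symm isPiSystem_pi ?_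
  rintro _ ⟨s, hs, rfl⟩
  simp_rw [pi_pi]
  exact Finset.measurable_prod _ fun i _ => (measurable_coe (hs i (Set.mem_univ i))).comp (hκ i)

lemma pi_map_eval_prod {ι : Type*} [Fintype ι] {X : ι → Type*} [∀ i, MeasurableSpace (X i)]
    (μ : ∀ i, Measure (X i)) [∀ i, IsProbabilityMeasure (μ i)] {i j : ι} (hij : i ≠ j) :
    (Measure.pi μ).map (fun x => (x i, x j)) = (μ i).prod (μ j) := by
  rw [← infinitePi_eq_pi]
  exact infinitePi_map_eval_prod hij

lemma pi_pi_eq_map_curry {ι κ X : Type*} [Fintype ι] [Fintype κ] [MeasurableSpace X]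
    (μ : ι → κ → Measure X) [∀ i j, IsProbabilityMeasure (μ i j)] :
    (Measure.pi fun i => Measure.pi fun j => μ i j)
      = (Measure.pi fun p : ι × κ => μ p.1 p.2).map (MeasurableEquiv.curry ι κ X) := by
  simp_rw [← infinitePi_eq_pi, infinitePi_map_curry]

lemma pi_pi_map_eval_prod {ι κ X : Type*} [Fintype ι] [Fintype κ] [MeasurableSpace X]
    (μ : ι → κ → Measure X) [∀ i j, IsProbabilityMeasure (μ i j)] {i s : ι} {j t : κ}
    (h : (i, j) ≠ (s, t)) :
    (Measure.pi fun i => Measure.pi fun j => μ i j).map (fun x => (x i j, x s t))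
      = (μ i j).prod (μ s t) := by
  rw [pi_pi_eq_map_curry, map_map (by fun_prop) (MeasurableEquiv.measurable _)]
  exact pi_map_eval_prod (fun p : ι × κ => μ p.1 p.2) h

end MeasureTheory.Measure

namespace MeasureTheory.ProbabilityMeasure

variable {α β : Type*} [MeasurableSpace α] [MeasurableSpace β]

lemma measurable_toMeasure : Measurable (toMeasure : ProbabilityMeasure α → Measure α) :=
  measurable_subtype_coe

/- `measurable_fun_prod` is stated for Mathlib's σ-algebra on `ProbabilityMeasure`; this copy is
elaborated with the (definitionally equal) one declared above, so that it can be rewritten with. -/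
lemma measurable_prod_toMeasure :
    Measurable fun p : ProbabilityMeasure α × ProbabilityMeasure β =>
      p.1.toMeasure.prod p.2.toMeasure :=
  measurable_fun_prod

lemma measurable_toMeasure_prod_self :
    Measurable fun P : ProbabilityMeasure α => P.toMeasure.prod P.toMeasure :=
  measurable_prod_toMeasure.comp (measurable_id.prodMk measurable_id)

lemma bind_prod_toMeasure (μ : Measure (ProbabilityMeasure α))
    (ν : Measure (ProbabilityMeasure β)) [IsProbabilityMeasure μ] [IsProbabilityMeasure ν] :
    (μ.prod ν).bind (fun p => p.1.toMeasure.prod p.2.toMeasure)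
      = (μ.bind toMeasure).prod (ν.bind toMeasure) := by
  have hμ := measurable_toMeasure (α := α)
  have hν := measurable_toMeasure (α := β)
  have : IsProbabilityMeasure (μ.bind toMeasure) :=
    isProbabilityMeasure_bind hμ.aemeasurable (.of_forall fun P => P.prop)
  have : IsProbabilityMeasure (ν.bind toMeasure) :=
    isProbabilityMeasure_bind hν.aemeasurable (.of_forall fun P => P.prop)
  refine (Measure.prod_eq fun s t hs ht => ?_).symm
  rw [Measure.bind_apply (hs.prod ht) measurable_prod_toMeasure.aemeasurable,
    Measure.bind_apply hs hμ.aemeasurable, Measure.bind_apply ht hν.aemeasurable]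
  simp_rw [Measure.prod_prod]
  exact lintegral_prod_mul ((Measure.measurable_coe hs).comp hμ).aemeasurable
    ((Measure.measurable_coe ht).comp hν).aemeasurable

end MeasureTheory.ProbabilityMeasure

lemma kerInner_eq_integral_prod {Y : Type*} [MeasurableSpace Y] {k : Y → Y → ℝ}
    {P Q : Measure Y} [SFinite P] [SFinite Q]
    (hk : Integrable (fun p : Y × Y => k p.1 p.2) (P.prod Q)) :
    kerInner k P Q = ∫ p, k p.1 p.2 ∂P.prod Q :=
  (integral_prod _ hk).symm

section TwoStage

variable {Y : Type*} [MeasurableSpace Y]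

instance isProbabilityMeasure_pmJoin (ν : Measure (ProbabilityMeasure Y))
    [IsProbabilityMeasure ν] : IsProbabilityMeasure (pmJoin ν) :=
  isProbabilityMeasure_bind ProbabilityMeasure.measurable_toMeasure.aemeasurable
    (.of_forall fun P => P.prop)

lemma twoStage_map_pair (ν : Measure (ProbabilityMeasure Y)) {n m : ℕ} {i s : Fin n}
    {j t : Fin m} (h : (i, j) ≠ (s, t)) :
    (twoStage ν n m).map (fun X => (X i j, X s t))
      = (Measure.pi fun _ => ν).bind fun Ps => (Ps i).toMeasure.prod (Ps s).toMeasure := by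
  have hsample : Measurable fun Ps : Fin n → ProbabilityMeasure Y =>
      Measure.pi fun i => Measure.pi fun _ : Fin m => (Ps i).toMeasure :=
    Measure.measurable_measure_pi fun i => Measure.measurable_measure_pi fun _ =>
      ProbabilityMeasure.measurable_toMeasure.comp (measurable_pi_apply i)
  rw [twoStage, Measure.map_bind hsample (by fun_prop)]
  congr with Ps : 1
  exact Measure.pi_pi_map_eval_prod (fun i _ => (Ps i).toMeasure) h

lemma twoStage_map_pair_within (ν : Measure (ProbabilityMeasure Y)) [IsProbabilityMeasure ν]
    {n m : ℕ} (i : Fin n) {j t : Fin m} (hjt : j ≠ t) :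
    (twoStage ν n m).map (fun X => (X i j, X i t))
      = ν.bind fun P => P.toMeasure.prod P.toMeasure :=
  calc (twoStage ν n m).map (fun X => (X i j, X i t))
      _ = (Measure.pi fun _ => ν).bind
          ((fun P : ProbabilityMeasure Y => P.toMeasure.prod P.toMeasure) ∘ Function.eval i) :=
        twoStage_map_pair ν (by simp [hjt])
      _ = ((Measure.pi fun _ => ν).map (Function.eval i)).bind
          fun P => P.toMeasure.prod P.toMeasure :=
        (Measure.bind_map (measurable_pi_apply i)
          ProbabilityMeasure.measurable_toMeasure_prod_self).symm
      _ = ν.bind fun P => P.toMeasure.prod P.toMeasure := by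
        rw [(measurePreserving_eval (fun _ : Fin n => ν) i).map_eq]

lemma twoStage_map_pair_across (ν : Measure (ProbabilityMeasure Y)) [IsProbabilityMeasure ν]
    {n m : ℕ} {i s : Fin n} (j t : Fin m) (his : i ≠ s) :
    (twoStage ν n m).map (fun X => (X i j, X s t)) = (pmJoin ν).prod (pmJoin ν) := by
  have hpair : Measurable fun Ps : Fin n → ProbabilityMeasure Y => (Ps i, Ps s) := by fun_prop
  calc (twoStage ν n m).map (fun X => (X i j, X s t))
      _ = (Measure.pi fun _ => ν).bind
          ((fun p : ProbabilityMeasure Y × ProbabilityMeasure Y =>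
            p.1.toMeasure.prod p.2.toMeasure) ∘ fun Ps => (Ps i, Ps s)) :=
        twoStage_map_pair ν (by simp [his])
      _ = ((Measure.pi fun _ => ν).map fun Ps => (Ps i, Ps s)).bind
          fun p => p.1.toMeasure.prod p.2.toMeasure :=
        (Measure.bind_map hpair ProbabilityMeasure.measurable_prod_toMeasure).symm
      _ = (pmJoin ν).prod (pmJoin ν) := by
        rw [Measure.pi_map_eval_prod (fun _ => ν) his, ProbabilityMeasure.bind_prod_toMeasure]
        rfl

end TwoStage

theorem twoStage_kernel_moments_general
    {Y : Type*} [MeasurableSpace Y]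
    (k : Y → Y → ℝ)
    (hk_meas : Measurable fun p : Y × Y => k p.1 p.2)
    (hk_bdd : ∃ K, ∀ x y, |k x y| ≤ K)
    (ν : Measure (ProbabilityMeasure Y)) [IsProbabilityMeasure ν]
    (n m : ℕ) :
    (∀ (i : Fin n) (j t : Fin m), j ≠ t →
        ∫ X, k (X i j) (X i t) ∂(twoStage ν n m)
          = ∫ P, kerInner k (P : Measure Y) (P : Measure Y) ∂ν)
    ∧ (∀ (i s : Fin n) (j t : Fin m), i ≠ s →
        ∫ X, k (X i j) (X s t) ∂(twoStage ν n m)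
          = kerInner k (pmJoin ν) (pmJoin ν)) := by
  obtain ⟨K, hK⟩ := hk_bdd
  have hk_int (μ : Measure (Y × Y)) [IsFiniteMeasure μ] : Integrable (fun p => k p.1 p.2) μ :=
    .of_bound hk_meas.aestronglyMeasurable K (.of_forall fun p => hK p.1 p.2)
  have integral_eq_map (i s : Fin n) (j t : Fin m) :
      ∫ X, k (X i j) (X s t) ∂(twoStage ν n m)
        = ∫ p, k p.1 p.2 ∂(twoStage ν n m).map (fun X => (X i j, X s t)) := by
    have hpair : Measurable fun X : Fin n → Fin m → Y => (X i j, X s t) := by fun_prop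
    exact (integral_map hpair.aemeasurable hk_meas.aestronglyMeasurable).symm
  refine ⟨fun i j t hjt => ?_, fun i s j t his => ?_⟩
  · have hdiag := ProbabilityMeasure.measurable_toMeasure_prod_self (α := Y)
    have : IsProbabilityMeasure (ν.bind fun P => P.toMeasure.prod P.toMeasure) :=
      isProbabilityMeasure_bind hdiag.aemeasurable (.of_forall fun _ => inferInstance)
    rw [integral_eq_map, twoStage_map_pair_within ν i hjt, Measure.integral_bind_s11 hdiag (hk_int _)]
    exact integral_congr_ae (.of_forall fun P => (kerInner_eq_integral_prod (hk_int _)).symm)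
  · rw [integral_eq_map, twoStage_map_pair_across ν j t his, kerInner_eq_integral_prod (hk_int _)]

/-- Expectations of single kernel evaluations under the two-stage sampling law:
within a cluster (`j ≠ t`) one obtains `∫ ⟨P|k|P⟩ dν(P)`; across clusters (`i ≠ s`)
one obtains `⟨join(ν)|k|join(ν)⟩`. -/
theorem twoStage_kernel_moments
    {Y : Type*} [MeasurableSpace Y]
    (k : Y → Y → ℝ)
    (hk_meas : Measurable fun p : Y × Y => k p.1 p.2)
    (hk_symm : ∀ x y, k x y = k y x)
    (hk_bdd : ∃ K, ∀ x y, |k x y| ≤ K)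
    (hk_psd : ∀ (N : ℕ) (x : Fin N → Y) (a : Fin N → ℝ),
      0 ≤ ∑ i, ∑ j, a i * k (x i) (x j) * a j)
    (ν : Measure (ProbabilityMeasure Y)) [IsProbabilityMeasure ν]
    (n m : ℕ) (hn : 2 ≤ n) (hm : 2 ≤ m) :
    (∀ (i : Fin n) (j t : Fin m), j ≠ t →
        ∫ X, k (X i j) (X i t) ∂(twoStage ν n m)
          = ∫ P, kerInner k (P : Measure Y) (P : Measure Y) ∂ν)
    ∧ (∀ (i s : Fin n) (j t : Fin m), i ≠ s →
        ∫ X, k (X i j) (X s t) ∂(twoStage ν n m)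
          = kerInner k (pmJoin ν) (pmJoin ν)) :=
  twoStage_kernel_moments_general k hk_meas hk_bdd ν n m
end
end
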